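/- (Theorem 2.1, sufficiency) Fix real numbers a11, a12, a21, a22, σx, σy, R with a22 ≠ 0, R > 0. Let ε₀ > 0 and let ŝ, s̃, a, σX² : (0, ε₀) → ℝ be bounded functions with ŝ(ε) ≥ 0, s̃(ε) ≥ 0, and a(ε) ≤ a₀ for some constant a₀ < 0, such that for each ε: (i) the residual −ŝ(ε)²/R + 2*ã*(1 − ε*â)*ŝ(ε) + σs(ε)² is O(ε²) as ε → 0⁺; (ii) −s̃(ε)²/R + 2*a(ε)*s̃(ε) + σX²(ε) = 0 exactly. If σX²(ε) = −2*(a(ε) − ã*(1 − ε*â))*ŝ(ε) + σs(ε)² + O(ε²) as ε → 0⁺, then s̃(ε) − ŝ(ε) = O(ε²) as ε → 0⁺ (and in particular lim_{ε→0⁺} (s̃(ε) − ŝ(ε))/ε = 0). -/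
import Mathlib


open Filter

/-- `f = O(ε²)` as `ε → 0⁺`, with the bound holding inside `(0, ε₀)`. -/
def IsO2 (ε₀ : ℝ) (f : ℝ → ℝ) : Prop :=
  ∃ C ε₁ : ℝ, 0 < C ∧ 0 < ε₁ ∧ ε₁ ≤ ε₀ ∧ ∀ ε, 0 < ε → ε < ε₁ → |f ε| ≤ C * ε ^ 2

/-- `σs(ε)² := σx²(1 − 2εâ) + ε σy² a12²/a22²`. -/
noncomputable def sigs (a12 a21 a22 σx σy ε : ℝ) : ℝ :=
  σx ^ 2 * (1 - 2 * ε * (a12 * a21 / a22 ^ 2)) + ε * σy ^ 2 * a12 ^ 2 / a22 ^ 2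

lemma isO2_tendsto (ε₀ : ℝ) (f : ℝ → ℝ) (h : IsO2 ε₀ f) :
    Tendsto (fun ε => f ε / ε) (nhdsWithin 0 (Set.Ioi 0)) (nhds 0) := by
  obtain ⟨C, ε₁, hC, hε₁, _, hb⟩ := h
  have hev : ∀ᶠ ε in nhdsWithin 0 (Set.Ioi 0), ‖f ε / ε‖ ≤ C * ε := by
    filter_upwards [Ioo_mem_nhdsGT_of_mem (by simp [hε₁] : (0:ℝ) ∈ Set.Ico 0 ε₁)]
      with ε hε
    obtain ⟨hε0, hεlt⟩ := hε
    have hb' := hb ε hε0 hεlt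
    rw [Real.norm_eq_abs, abs_div, abs_of_pos hε0, div_le_iff₀ hε0]
    calc |f ε| ≤ C * ε ^ 2 := hb'
      _ = C * ε * ε := by ring
  have hlim : Tendsto (fun ε : ℝ => C * ε) (nhdsWithin 0 (Set.Ioi 0)) (nhds 0) := by
    have : Tendsto (fun ε : ℝ => C * ε) (nhds 0) (nhds (C * 0)) :=
      (tendsto_const_nhds.mul tendsto_id)
    simpa using this.mono_left nhdsWithin_le_nhds
  exact squeeze_zero_norm' hev hlim

/-- Theorem 2.1, sufficiency: if `σX²` lies on the manifold, then
`s̃ − ŝ = O(ε²)` as `ε → 0⁺`, and in particular `(s̃ − ŝ)/ε → 0`. -/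
theorem stmt2 (a11 a12 a21 a22 σx σy R : ℝ) (ha22 : a22 ≠ 0) (hR : 0 < R)
    (ε₀ : ℝ) (hε₀ : 0 < ε₀) (shat stil a sigX2 : ℝ → ℝ)
    (hbdd : ∃ M : ℝ, ∀ ε, 0 < ε → ε < ε₀ →
      |shat ε| ≤ M ∧ |stil ε| ≤ M ∧ |a ε| ≤ M ∧ |sigX2 ε| ≤ M)
    (hshat : ∀ ε, 0 < ε → ε < ε₀ → 0 ≤ shat ε)
    (hstil : ∀ ε, 0 < ε → ε < ε₀ → 0 ≤ stil ε)
    (a₀ : ℝ) (ha₀ : a₀ < 0) (ha : ∀ ε, 0 < ε → ε < ε₀ → a ε ≤ a₀)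
    (hres : IsO2 ε₀ (fun ε =>
      -(shat ε) ^ 2 / R
        + 2 * (a11 - a12 * a21 / a22) * (1 - ε * (a12 * a21 / a22 ^ 2)) * shat ε
        + sigs a12 a21 a22 σx σy ε))
    (hric : ∀ ε, 0 < ε → ε < ε₀ →
      -(stil ε) ^ 2 / R + 2 * a ε * stil ε + sigX2 ε = 0)
    (hman : IsO2 ε₀ (fun ε =>
      sigX2 ε -
        (-2 * (a ε - (a11 - a12 * a21 / a22) * (1 - ε * (a12 * a21 / a22 ^ 2))) * shat ε
          + sigs a12 a21 a22 σx σy ε))) :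
    IsO2 ε₀ (fun ε => stil ε - shat ε) ∧
      Tendsto (fun ε => (stil ε - shat ε) / ε) (nhdsWithin 0 (Set.Ioi 0)) (nhds 0) := by
  have main : IsO2 ε₀ (fun ε => stil ε - shat ε) := by
    obtain ⟨C₁, e₁, hC₁, he₁, he₁₀, hb₁⟩ := hres
    obtain ⟨C₂, e₂, hC₂, he₂, he₂₀, hb₂⟩ := hman
    refine ⟨(C₁ + C₂) / (-2 * a₀), min e₁ e₂, div_pos (by positivity) (by linarith),
      lt_min he₁ he₂, (min_le_left _ _).trans he₁₀, ?_⟩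
    intro ε hε0 hεlt
    have hεe₁ : ε < e₁ := hεlt.trans_le (min_le_left _ _)
    have hεe₂ : ε < e₂ := hεlt.trans_le (min_le_right _ _)
    have hεε₀ : ε < ε₀ := lt_of_lt_of_le hεe₁ he₁₀
    have h1 := hb₁ ε hε0 hεe₁
    have h2 := hb₂ ε hε0 hεe₂
    have hr := hric ε hε0 hεε₀
    have key : (-(shat ε) ^ 2 / R
        + 2 * (a11 - a12 * a21 / a22) * (1 - ε * (a12 * a21 / a22 ^ 2)) * shat ε
        + sigs a12 a21 a22 σx σy ε)
        + (sigX2 ε -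
        (-2 * (a ε - (a11 - a12 * a21 / a22) * (1 - ε * (a12 * a21 / a22 ^ 2))) * shat ε
          + sigs a12 a21 a22 σx σy ε))
        = (stil ε - shat ε) * ((stil ε + shat ε) / R - 2 * a ε) := by
      linear_combination hr
    have hK : -2 * a₀ ≤ (stil ε + shat ε) / R - 2 * a ε := by
      have h3 := hshat ε hε0 hεε₀
      have h4 := hstil ε hε0 hεε₀
      have h5 := ha ε hε0 hεε₀
      have h6 : 0 ≤ (stil ε + shat ε) / R := by positivity
      nlinarith
    have hKpos : 0 < -2 * a₀ := by linarith
    have habs : |stil ε - shat ε| * (-2 * a₀) ≤ (C₁ + C₂) * ε ^ 2 := by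
      calc |stil ε - shat ε| * (-2 * a₀)
          ≤ |stil ε - shat ε| * |(stil ε + shat ε) / R - 2 * a ε| := by
            apply mul_le_mul_of_nonneg_left _ (abs_nonneg _)
            exact le_trans hK (le_abs_self _)
        _ = |(stil ε - shat ε) * ((stil ε + shat ε) / R - 2 * a ε)| := (abs_mul _ _).symm
        _ ≤ C₁ * ε ^ 2 + C₂ * ε ^ 2 := by
            rw [← key]; exact (abs_add_le _ _).trans (add_le_add h1 h2)
        _ = (C₁ + C₂) * ε ^ 2 := by ring
    rw [div_mul_eq_mul_div, le_div_iff₀ hKpos]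
    linarith [habs]
  exact ⟨main, isO2_tendsto ε₀ _ main⟩
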